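/- Let x̃ : ℝ^M → X satisfy ‖x(u) − x̃(u)‖_X ≤ ε ‖x(u)‖_X for all u ∈ ℝ^M, where 0 ≤ ε < 1, and let η̄ := sup_{u≠0} ‖x(u)‖_X / ‖u‖_pr. Suppose v ∈ ℝ^M, v ≠ 0, attains the infimum of u ↦ ‖L x̃(u)‖_Γ / ‖u‖_pr over nonzero u. Then β_G ≤ ‖L x(v)‖_Γ / ‖v‖_pr ≤ β_G + 2 γ η̄ ε, where β_G := inf_{u≠0} ‖L x(u)‖_Γ / ‖u‖_pr. -/
import Mathlib


open Matrix

/-- The norm `‖d‖_A := √(dᵀ A⁻¹ d)` induced by the inverse of an SPD matrix `A`. -/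
noncomputable def invWeightedNorm {n : ℕ} (A : Matrix (Fin n) (Fin n) ℝ) (d : Fin n → ℝ) : ℝ :=
  Real.sqrt (d ⬝ᵥ (A⁻¹ *ᵥ d))


section aux

variable {n : ℕ} {B : Matrix (Fin n) (Fin n) ℝ}

lemma quad_nonneg (hB : B.PosDef) (d : Fin n → ℝ) : 0 ≤ d ⬝ᵥ (B *ᵥ d) := by
  have := hB.posSemidef.re_dotProduct_nonneg d
  simpa using this

lemma quad_pos (hB : B.PosDef) {d : Fin n → ℝ} (hd : d ≠ 0) : 0 < d ⬝ᵥ (B *ᵥ d) := by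
  have := hB.re_dotProduct_pos hd
  simpa using this

lemma bilin_symm (hB : B.PosDef) (a b : Fin n → ℝ) :
    a ⬝ᵥ (B *ᵥ b) = b ⬝ᵥ (B *ᵥ a) := by
  have hsym : Bᵀ = B := hB.isHermitian
  rw [dotProduct_mulVec, ← mulVec_transpose, hsym, dotProduct_comm]

lemma quad_add (hB : B.PosDef) (a b : Fin n → ℝ) :
    (a + b) ⬝ᵥ (B *ᵥ (a + b)) =
      a ⬝ᵥ (B *ᵥ a) + 2 * (a ⬝ᵥ (B *ᵥ b)) + b ⬝ᵥ (B *ᵥ b) := by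
  simp only [mulVec_add, add_dotProduct, dotProduct_add, bilin_symm hB b a]
  ring

lemma quad_smul (c : ℝ) (a : Fin n → ℝ) :
    (c • a) ⬝ᵥ (B *ᵥ (c • a)) = c ^ 2 * (a ⬝ᵥ (B *ᵥ a)) := by
  rw [mulVec_smul, smul_dotProduct, dotProduct_smul, smul_eq_mul, smul_eq_mul]
  ring

lemma quad_cs (hB : B.PosDef) (a b : Fin n → ℝ) :
    (a ⬝ᵥ (B *ᵥ b)) ^ 2 ≤ (a ⬝ᵥ (B *ᵥ a)) * (b ⬝ᵥ (B *ᵥ b)) := by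
  have h : ∀ t : ℝ, 0 ≤ (b ⬝ᵥ (B *ᵥ b)) * (t * t) + (2 * (a ⬝ᵥ (B *ᵥ b))) * t
      + a ⬝ᵥ (B *ᵥ a) := by
    intro t
    have := quad_nonneg hB (a + t • b)
    rw [quad_add hB, quad_smul] at this
    rw [mulVec_smul, dotProduct_smul, smul_eq_mul] at this
    nlinarith [this]
  have hd := discrim_le_zero h
  rw [discrim] at hd
  nlinarith [hd]

end aux

section props

variable {n : ℕ} {A : Matrix (Fin n) (Fin n) ℝ}

lemma iwn_nonneg (A : Matrix (Fin n) (Fin n) ℝ) (d : Fin n → ℝ) :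
    0 ≤ invWeightedNorm A d := Real.sqrt_nonneg _

lemma iwn_pos (hA : A.PosDef) {d : Fin n → ℝ} (hd : d ≠ 0) :
    0 < invWeightedNorm A d :=
  Real.sqrt_pos.2 (quad_pos hA.inv hd)

lemma iwn_smul (hA : A.PosDef) (c : ℝ) (d : Fin n → ℝ) :
    invWeightedNorm A (c • d) = |c| * invWeightedNorm A d := by
  unfold invWeightedNorm
  rw [quad_smul, Real.sqrt_mul (sq_nonneg c), Real.sqrt_sq_eq_abs]

lemma iwn_triangle (hA : A.PosDef) (a b : Fin n → ℝ) :
    invWeightedNorm A (a + b) ≤ invWeightedNorm A a + invWeightedNorm A b := by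
  unfold invWeightedNorm
  have hB := hA.inv
  have hcs := quad_cs hB a b
  have h1 := quad_nonneg hB a
  have h2 := quad_nonneg hB b
  have hb : a ⬝ᵥ (A⁻¹ *ᵥ b) ≤ Real.sqrt (a ⬝ᵥ (A⁻¹ *ᵥ a)) * Real.sqrt (b ⬝ᵥ (A⁻¹ *ᵥ b)) := by
    have : a ⬝ᵥ (A⁻¹ *ᵥ b) ≤ |a ⬝ᵥ (A⁻¹ *ᵥ b)| := le_abs_self _
    refine this.trans ?_
    rw [← Real.sqrt_mul_self (abs_nonneg (a ⬝ᵥ (A⁻¹ *ᵥ b))), ← Real.sqrt_mul h1]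
    apply Real.sqrt_le_sqrt
    nlinarith [sq_abs (a ⬝ᵥ (A⁻¹ *ᵥ b))]
  rw [show a + b = a + b from rfl]
  have hq : (a + b) ⬝ᵥ (A⁻¹ *ᵥ (a + b))
      ≤ (Real.sqrt (a ⬝ᵥ (A⁻¹ *ᵥ a)) + Real.sqrt (b ⬝ᵥ (A⁻¹ *ᵥ b))) ^ 2 := by
    rw [quad_add hB]
    have hs1 : Real.sqrt (a ⬝ᵥ (A⁻¹ *ᵥ a)) ^ 2 = a ⬝ᵥ (A⁻¹ *ᵥ a) := Real.sq_sqrt h1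
    have hs2 : Real.sqrt (b ⬝ᵥ (A⁻¹ *ᵥ b)) ^ 2 = b ⬝ᵥ (A⁻¹ *ᵥ b) := Real.sq_sqrt h2
    nlinarith [hb]
  calc Real.sqrt ((a + b) ⬝ᵥ (A⁻¹ *ᵥ (a + b)))
      ≤ Real.sqrt ((Real.sqrt (a ⬝ᵥ (A⁻¹ *ᵥ a)) + Real.sqrt (b ⬝ᵥ (A⁻¹ *ᵥ b))) ^ 2) :=
        Real.sqrt_le_sqrt hq
    _ = _ := by
        rw [Real.sqrt_sq (by positivity)]

lemma iwn_abs_sub (hA : A.PosDef) (a b : Fin n → ℝ) :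
    |invWeightedNorm A a - invWeightedNorm A b| ≤ invWeightedNorm A (a - b) := by
  rw [abs_sub_le_iff]
  constructor
  · have := iwn_triangle hA (a - b) b
    simp only [sub_add_cancel] at this
    linarith
  · have := iwn_triangle hA (b - a) a
    simp only [sub_add_cancel] at this
    have hneg : invWeightedNorm A (b - a) = invWeightedNorm A (a - b) := by
      have : b - a = (-1 : ℝ) • (a - b) := by ring_nf; module
      rw [this, iwn_smul hA]
      simp
    linarith

lemma iwn_zero (A : Matrix (Fin n) (Fin n) ℝ) : invWeightedNorm A 0 = 0 := by
  simp [invWeightedNorm]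

lemma iwn_upper (hA : A.PosDef) : ∃ C : ℝ, 0 ≤ C ∧ ∀ d, invWeightedNorm A d ≤ C * ‖d‖ := by
  set S : ℝ := ∑ i, ∑ j, |(A⁻¹) i j| with hS
  have hS0 : 0 ≤ S := Finset.sum_nonneg fun i _ => Finset.sum_nonneg fun j _ => abs_nonneg _
  refine ⟨Real.sqrt S, Real.sqrt_nonneg _, fun d => ?_⟩
  have hq : d ⬝ᵥ (A⁻¹ *ᵥ d) ≤ S * ‖d‖ ^ 2 := by
    have h1 : d ⬝ᵥ (A⁻¹ *ᵥ d) ≤ ∑ i, ∑ j, |(A⁻¹) i j| * (‖d‖ * ‖d‖) := by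
      calc d ⬝ᵥ (A⁻¹ *ᵥ d) = ∑ i, d i * ∑ j, (A⁻¹) i j * d j := rfl
        _ ≤ ∑ i, ∑ j, |(A⁻¹) i j| * (‖d‖ * ‖d‖) := by
          apply Finset.sum_le_sum; intro i _
          calc d i * ∑ j, (A⁻¹) i j * d j = ∑ j, d i * ((A⁻¹) i j * d j) := by
                rw [Finset.mul_sum]
            _ ≤ ∑ j, |(A⁻¹) i j| * (‖d‖ * ‖d‖) := by
              apply Finset.sum_le_sum; intro j _
              have hdi : |d i| ≤ ‖d‖ := by simpa using norm_le_pi_norm d i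
              have hdj : |d j| ≤ ‖d‖ := by simpa using norm_le_pi_norm d j
              calc d i * ((A⁻¹) i j * d j) ≤ |d i * ((A⁻¹) i j * d j)| := le_abs_self _
                _ = |(A⁻¹) i j| * (|d i| * |d j|) := by rw [abs_mul, abs_mul]; ring
                _ ≤ |(A⁻¹) i j| * (‖d‖ * ‖d‖) := by
                    refine mul_le_mul_of_nonneg_left ?_ (abs_nonneg _)
                    exact mul_le_mul hdi hdj (abs_nonneg _) (norm_nonneg _)
    calc d ⬝ᵥ (A⁻¹ *ᵥ d) ≤ ∑ i, ∑ j, |(A⁻¹) i j| * (‖d‖ * ‖d‖) := h1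
      _ = S * ‖d‖ ^ 2 := by simp only [← Finset.sum_mul]; ring
  calc invWeightedNorm A d ≤ Real.sqrt (S * ‖d‖ ^ 2) := Real.sqrt_le_sqrt hq
    _ = Real.sqrt S * ‖d‖ := by
        rw [Real.sqrt_mul hS0, Real.sqrt_sq (norm_nonneg _)]

lemma iwn_lower (hA : A.PosDef) : ∃ c : ℝ, 0 < c ∧ ∀ d, c * ‖d‖ ≤ invWeightedNorm A d := by
  rcases subsingleton_or_nontrivial (Fin n → ℝ) with hsub | hnt
  · refine ⟨1, one_pos, fun d => ?_⟩
    have : d = 0 := Subsingleton.elim d 0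
    simp [this, iwn_zero]
  · have hcomp : IsCompact (Metric.sphere (0 : Fin n → ℝ) 1) := isCompact_sphere _ _
    have hne : (Metric.sphere (0 : Fin n → ℝ) 1).Nonempty :=
      NormedSpace.sphere_nonempty.2 zero_le_one
    have hcont : Continuous (fun d : Fin n → ℝ => invWeightedNorm A d) := by
      unfold invWeightedNorm
      apply Real.continuous_sqrt.comp
      have : (fun d : Fin n → ℝ => d ⬝ᵥ (A⁻¹ *ᵥ d))
          = fun d => ∑ i, d i * ∑ j, (A⁻¹) i j * d j := rfl
      rw [this]
      exact continuous_finset_sum _ fun i _ => (continuous_apply i).mul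
        (continuous_finset_sum _ fun j _ => continuous_const.mul (continuous_apply j))
    obtain ⟨d0, hd0mem, hd0min'⟩ := hcomp.exists_isMinOn hne hcont.continuousOn
    have hd0min : ∀ e ∈ Metric.sphere (0 : Fin n → ℝ) 1,
        invWeightedNorm A d0 ≤ invWeightedNorm A e := fun e he => hd0min' he
    have hd0norm : ‖d0‖ = 1 := by simpa using hd0mem
    have hd0ne : d0 ≠ 0 := by
      intro h; rw [h, norm_zero] at hd0norm; exact one_ne_zero hd0norm.symm
    refine ⟨invWeightedNorm A d0, iwn_pos hA hd0ne, fun d => ?_⟩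
    rcases eq_or_ne d 0 with rfl | hd
    · simp [iwn_zero]
    · have hdn : (0:ℝ) < ‖d‖ := norm_pos_iff.2 hd
      have hmem : (‖d‖⁻¹ • d) ∈ Metric.sphere (0 : Fin n → ℝ) 1 := by
        simp [norm_smul, abs_of_pos (inv_pos.2 hdn), inv_mul_cancel₀ hdn.ne']
      have hle := hd0min _ hmem
      rw [iwn_smul hA, abs_inv, abs_norm] at hle
      have := mul_le_mul_of_nonneg_right hle hdn.le
      calc invWeightedNorm A d0 * ‖d‖ ≤ ‖d‖⁻¹ * invWeightedNorm A d * ‖d‖ := this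
        _ = invWeightedNorm A d := by field_simp

/-- If `v ≠ 0` attains the infimum of the surrogate quotient `u ↦ ‖L x̃(u)‖_Γ / ‖u‖_pr`,
then `β_G ≤ ‖L x(v)‖_Γ / ‖v‖_pr ≤ β_G + 2 γ η̄ ε`. -/
theorem surrogate_infimizer_G_bound {K M : ℕ}
    {X : Type*} [NormedAddCommGroup X] [InnerProductSpace ℝ X]
    (x : (Fin M → ℝ) →L[ℝ] X) (L : X →L[ℝ] (Fin K → ℝ))
    (Γ : Matrix (Fin K) (Fin K) ℝ) (hΓ : Γ.PosDef)
    (Spr : Matrix (Fin M) (Fin M) ℝ) (hpr : Spr.PosDef)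
    (xt : (Fin M → ℝ) → X) (ε : ℝ) (hε0 : 0 ≤ ε) (hε1 : ε < 1)
    (happrox : ∀ u : Fin M → ℝ, ‖x u - xt u‖ ≤ ε * ‖x u‖)
    (γ ηbar βG : ℝ)
    (hγ : γ = ⨆ w : {w : X // ‖w‖ = 1}, invWeightedNorm Γ (L w.1))
    (hηbar : ηbar = ⨆ u : {v : Fin M → ℝ // v ≠ 0}, ‖x u.1‖ / invWeightedNorm Spr u.1)
    (hβG : βG = ⨅ u : {v : Fin M → ℝ // v ≠ 0},
      invWeightedNorm Γ (L (x u.1)) / invWeightedNorm Spr u.1)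
    (v : Fin M → ℝ) (hv0 : v ≠ 0)
    (hvinf : invWeightedNorm Γ (L (xt v)) / invWeightedNorm Spr v
      = ⨅ u : {w : Fin M → ℝ // w ≠ 0},
          invWeightedNorm Γ (L (xt u.1)) / invWeightedNorm Spr u.1) :
    βG ≤ invWeightedNorm Γ (L (x v)) / invWeightedNorm Spr v ∧
      invWeightedNorm Γ (L (x v)) / invWeightedNorm Spr v ≤ βG + 2 * γ * ηbar * ε := by
  obtain ⟨CΓ, hCΓ0, hCΓ⟩ := iwn_upper hΓ
  obtain ⟨cpr, hcpr0, hcpr⟩ := iwn_lower hpr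
  haveI : Nonempty {w : Fin M → ℝ // w ≠ 0} := ⟨⟨v, hv0⟩⟩
  -- γ facts
  have hγ_facts : (0 ≤ γ) ∧ ∀ w : X, invWeightedNorm Γ (L w) ≤ γ * ‖w‖ := by
    by_cases hX : ∃ w : X, w ≠ 0
    · obtain ⟨w₀, hw₀⟩ := hX
      have hw₀n : (0:ℝ) < ‖w₀‖ := norm_pos_iff.2 hw₀
      have hunit : ‖(‖w₀‖⁻¹ • w₀ : X)‖ = 1 := by
        rw [norm_smul, norm_inv, norm_norm, inv_mul_cancel₀ hw₀n.ne']
      have hbdd : BddAbove (Set.range fun w : {w : X // ‖w‖ = 1} =>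
          invWeightedNorm Γ (L w.1)) := by
        refine ⟨CΓ * ‖L‖, ?_⟩
        rintro y ⟨w, rfl⟩
        calc invWeightedNorm Γ (L w.1) ≤ CΓ * ‖L w.1‖ := hCΓ _
          _ ≤ CΓ * (‖L‖ * ‖w.1‖) := mul_le_mul_of_nonneg_left (L.le_opNorm _) hCΓ0
          _ = CΓ * ‖L‖ := by rw [w.2, mul_one]
      have hle : ∀ w : {w : X // ‖w‖ = 1}, invWeightedNorm Γ (L w.1) ≤ γ := by
        intro w; rw [hγ]; exact le_ciSup hbdd w
      have hγnn : 0 ≤ γ :=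
        le_trans (iwn_nonneg _ _) (hle ⟨‖w₀‖⁻¹ • w₀, hunit⟩)
      refine ⟨hγnn, fun w => ?_⟩
      rcases eq_or_ne w 0 with rfl | hw
      · simp [iwn_zero]
      · have hwp : (0:ℝ) < ‖w‖ := norm_pos_iff.2 hw
        have h1 := hle ⟨‖w‖⁻¹ • w, by
          rw [norm_smul, norm_inv, norm_norm, inv_mul_cancel₀ hwp.ne']⟩
        rw [L.map_smul, iwn_smul hΓ, abs_inv, abs_norm] at h1
        have := mul_le_mul_of_nonneg_right h1 hwp.le
        calc invWeightedNorm Γ (L w) = ‖w‖⁻¹ * invWeightedNorm Γ (L w) * ‖w‖ := by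
              field_simp
          _ ≤ γ * ‖w‖ := this
    · push_neg at hX
      haveI : IsEmpty {w : X // ‖w‖ = 1} := ⟨fun w => by
        have h0 := hX w.1
        have := w.2
        rw [h0, norm_zero] at this
        exact zero_ne_one this⟩
      have hγ0 : γ = 0 := by rw [hγ, Real.iSup_of_isEmpty]
      refine ⟨le_of_eq hγ0.symm, fun w => ?_⟩
      rw [hX w, map_zero, iwn_zero, hγ0, zero_mul]
  obtain ⟨hγnn, hLle⟩ := hγ_facts
  -- ηbar facts
  have hηbdd : BddAbove (Set.range fun u : {w : Fin M → ℝ // w ≠ 0} =>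
      ‖x u.1‖ / invWeightedNorm Spr u.1) := by
    refine ⟨‖x‖ / cpr, ?_⟩
    rintro y ⟨u, rfl⟩
    have hNu : 0 < invWeightedNorm Spr u.1 := iwn_pos hpr u.2
    rw [div_le_div_iff₀ hNu hcpr0]
    calc ‖x u.1‖ * cpr ≤ (‖x‖ * ‖u.1‖) * cpr :=
          mul_le_mul_of_nonneg_right (x.le_opNorm _) hcpr0.le
      _ = ‖x‖ * (cpr * ‖u.1‖) := by ring
      _ ≤ ‖x‖ * invWeightedNorm Spr u.1 :=
          mul_le_mul_of_nonneg_left (hcpr _) (norm_nonneg _)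
  have hηle : ∀ u : {w : Fin M → ℝ // w ≠ 0},
      ‖x u.1‖ / invWeightedNorm Spr u.1 ≤ ηbar := by
    intro u; rw [hηbar]; exact le_ciSup hηbdd u
  have hηnn : 0 ≤ ηbar :=
    le_trans (div_nonneg (norm_nonneg _) (iwn_nonneg _ _)) (hηle ⟨v, hv0⟩)
  have hxle : ∀ u : Fin M → ℝ, u ≠ 0 → ‖x u‖ ≤ ηbar * invWeightedNorm Spr u := by
    intro u hu
    have hNu : 0 < invWeightedNorm Spr u := iwn_pos hpr hu
    have := hηle ⟨u, hu⟩
    rw [div_le_iff₀ hNu] at this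
    linarith
  -- key estimate
  set D : ℝ := γ * ηbar * ε with hD
  have hDnn : 0 ≤ D := by positivity
  have hkey : ∀ u : Fin M → ℝ, u ≠ 0 →
      |invWeightedNorm Γ (L (x u)) - invWeightedNorm Γ (L (xt u))|
        ≤ D * invWeightedNorm Spr u := by
    intro u hu
    calc |invWeightedNorm Γ (L (x u)) - invWeightedNorm Γ (L (xt u))|
        ≤ invWeightedNorm Γ (L (x u) - L (xt u)) := iwn_abs_sub hΓ _ _
      _ = invWeightedNorm Γ (L (x u - xt u)) := by rw [map_sub]
      _ ≤ γ * ‖x u - xt u‖ := hLle _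
      _ ≤ γ * (ε * ‖x u‖) := mul_le_mul_of_nonneg_left (happrox u) hγnn
      _ ≤ γ * (ε * (ηbar * invWeightedNorm Spr u)) := by
          refine mul_le_mul_of_nonneg_left
            (mul_le_mul_of_nonneg_left (hxle u hu) hε0) hγnn
      _ = D * invWeightedNorm Spr u := by rw [hD]; ring
  -- quotient comparison
  have hquot : ∀ u : Fin M → ℝ, (hu : u ≠ 0) →
      |invWeightedNorm Γ (L (x u)) / invWeightedNorm Spr u
        - invWeightedNorm Γ (L (xt u)) / invWeightedNorm Spr u| ≤ D := by
    intro u hu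
    have hNu : 0 < invWeightedNorm Spr u := iwn_pos hpr hu
    rw [div_sub_div_same, abs_div, abs_of_pos hNu, div_le_iff₀ hNu]
    exact hkey u hu
  -- bddBelow facts
  have hbb_f : BddBelow (Set.range fun u : {w : Fin M → ℝ // w ≠ 0} =>
      invWeightedNorm Γ (L (x u.1)) / invWeightedNorm Spr u.1) := by
    refine ⟨0, ?_⟩; rintro y ⟨u, rfl⟩
    exact div_nonneg (iwn_nonneg _ _) (iwn_nonneg _ _)
  have hbb_g : BddBelow (Set.range fun u : {w : Fin M → ℝ // w ≠ 0} =>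
      invWeightedNorm Γ (L (xt u.1)) / invWeightedNorm Spr u.1) := by
    refine ⟨0, ?_⟩; rintro y ⟨u, rfl⟩
    exact div_nonneg (iwn_nonneg _ _) (iwn_nonneg _ _)
  constructor
  · rw [hβG]
    exact ciInf_le hbb_f ⟨v, hv0⟩
  · -- f v ≤ βG + 2D
    have h1 := hquot v hv0
    rw [abs_le] at h1
    have h2 : ∀ u : {w : Fin M → ℝ // w ≠ 0},
        invWeightedNorm Γ (L (x v)) / invWeightedNorm Spr v - 2 * D
          ≤ invWeightedNorm Γ (L (x u.1)) / invWeightedNorm Spr u.1 := by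
      intro u
      have hgu : invWeightedNorm Γ (L (xt v)) / invWeightedNorm Spr v
          ≤ invWeightedNorm Γ (L (xt u.1)) / invWeightedNorm Spr u.1 := by
        rw [hvinf]; exact ciInf_le hbb_g u
      have h3 := hquot u.1 u.2
      rw [abs_le] at h3
      linarith [h1.1, h1.2, h3.1, h3.2]
    have h4 : invWeightedNorm Γ (L (x v)) / invWeightedNorm Spr v - 2 * D ≤ βG := by
      rw [hβG]; exact le_ciInf h2
    have : 2 * γ * ηbar * ε = 2 * D := by rw [hD]; ring
    linarith
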